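/- arXiv:0712.2505 — 7 statements merged into one kernel-verified Lean document; each statement's English description precedes it below -/
import Mathlib

section
/- Let P be the symmetric integer 4×4 matrix with rows (2,-1,-1,-1), (-1,0,1,1), (-1,1,0,1), (-1,1,1,0), and let T be the permutation matrix fixing the first standard basis vector of ℤ^4 and cyclically permuting the second, third, and fourth. Then: (i) vᵀ P v ∈ 2ℤ for every v ∈ ℤ^4 (P is even); (ii) Tᵀ P T = P (the form is invariant under the order-3 action of T); (iii) there exists U ∈ GL_4(ℤ) with Uᵀ P U equal to the block diagonal matrix H ⊕ H, where H = [[0,1],[1,0]] (in particular P is unimodular); (iv) the sublattice {v ∈ ℤ^4 : Tv = v} has rank 2 and the restriction of the form P to it is positive definite. -/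
/-!
Everything about `P` except the rank and positivity on the fixed lattice is a finite matrix
identity. Evenness holds because `P = Q + Qᵀ` for an integer matrix `Q`, so
`vᵀ P v = 2 vᵀ Q v`. The fixed vectors of `T` are those with `v₁ = v₂ = v₃`, i.e. the image of
the injective map `M : ℤ² → ℤ⁴`, `(a, b) ↦ (a, b, b, b)`; the form restricted to it has Gram
matrix `Mᵀ P M = [[2, -3], [-3, 6]]`, a positive definite binary form.
-/

open Matrix

/-- The matrix `P` of Lemma 3.3(2) with respect to the basis `{f, e, ge, g²e}`. -/
def Pmat : Matrix (Fin 4) (Fin 4) ℤ :=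
  !![2, -1, -1, -1; -1, 0, 1, 1; -1, 1, 0, 1; -1, 1, 1, 0]

/-- The permutation matrix fixing the first standard basis vector of `ℤ⁴` and cyclically
permuting the second, third and fourth. -/
def Tmat : Matrix (Fin 4) (Fin 4) ℤ :=
  !![1, 0, 0, 0; 0, 0, 0, 1; 0, 1, 0, 0; 0, 0, 1, 0]

/-- The orthogonal sum `H ⊕ H` of two hyperbolic planes `H = [[0,1],[1,0]]`. -/
def HHmat : Matrix (Fin 4) (Fin 4) ℤ :=
  !![0, 1, 0, 0; 1, 0, 0, 0; 0, 0, 0, 1; 0, 0, 1, 0]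

section QuadraticForms

variable {R : Type*} {m n : Type*} [Fintype m] [Fintype n]

theorem dotProduct_mulVec_mulVec_self [CommSemiring R] (A : Matrix m m R) (M : Matrix m n R)
    (w : n → R) : M *ᵥ w ⬝ᵥ A *ᵥ (M *ᵥ w) = w ⬝ᵥ (Mᵀ * A * M) *ᵥ w := by
  rw [mulVec_mulVec, ← vecMul_transpose, dotProduct_mulVec, vecMul_vecMul, ← dotProduct_mulVec,
    Matrix.mul_assoc]

theorem dotProduct_add_transpose_mulVec_self [CommSemiring R] (Q : Matrix n n R) (v : n → R) :
    v ⬝ᵥ (Q + Qᵀ) *ᵥ v = 2 * (v ⬝ᵥ Q *ᵥ v) := by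
  rw [add_mulVec, dotProduct_add, mulVec_transpose, dotProduct_comm v (v ᵥ* Q),
    ← dotProduct_mulVec, two_mul]

theorem dotProduct_mulVec_fin_two_pos [CommRing R] [LinearOrder R] [IsStrictOrderedRing R]
    {a b c : R} (ha : 0 < a) (hdisc : 0 < a * c - b ^ 2) {w : Fin 2 → R} (hw : w ≠ 0) :
    0 < w ⬝ᵥ !![a, b; b, c] *ᵥ w := by
  have hw' : w 0 ≠ 0 ∨ w 1 ≠ 0 := by
    by_contra! h
    exact hw (funext fun i => by fin_cases i <;> simp [h.1, h.2])
  have key : a * (w ⬝ᵥ !![a, b; b, c] *ᵥ w) =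
      (a * w 0 + b * w 1) ^ 2 + (a * c - b ^ 2) * w 1 ^ 2 := by
    simp only [dotProduct, mulVec, Fin.sum_univ_two, of_apply, cons_val', cons_val_zero,
      cons_val_one, empty_val', cons_val_fin_one]
    ring
  refine pos_of_mul_pos_right (key ▸ ?_) ha.le
  rcases eq_or_ne (w 1) 0 with h1 | h1
  · have h0 : a * w 0 ≠ 0 := mul_ne_zero ha.ne' (hw'.resolve_right (not_not.2 h1))
    simpa [h1] using sq_pos_of_ne_zero h0
  · positivity

end QuadraticForms

theorem exists_Pmat_eq_add_transpose : ∃ Q : Matrix (Fin 4) (Fin 4) ℤ, Pmat = Q + Qᵀ :=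
  ⟨!![1, -1, -1, -1; 0, 0, 1, 1; 0, 0, 0, 1; 0, 0, 0, 0], by decide⟩

theorem exists_isUnit_det_transpose_mul_Pmat_mul_eq_HHmat :
    ∃ U : Matrix (Fin 4) (Fin 4) ℤ, IsUnit U.det ∧ Uᵀ * Pmat * U = HHmat :=
  ⟨!![-2, -1, -1, 1; -2, -1, -2, 1; -1, 0, 0, 0; 0, -1, -1, 0],
    isUnit_det_of_right_inverse
      (B := !![0, 0, -1, 0; -1, 1, 0, -1; 1, -1, 0, 0; 1, 0, -2, -1]) (by decide),
    by decide⟩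

theorem Tmat_mulVec (v : Fin 4 → ℤ) : Tmat *ᵥ v = ![v 0, v 3, v 1, v 2] := by
  funext i
  fin_cases i <;> simp [Tmat, mulVec, dotProduct, Fin.sum_univ_four]

def fixedLatticeBasis : Matrix (Fin 4) (Fin 2) ℤ :=
  !![1, 0; 0, 1; 0, 1; 0, 1]

theorem mulVecLin_fixedLatticeBasis_injective :
    Function.Injective fixedLatticeBasis.mulVecLin :=
  Function.LeftInverse.injective (g := fun v => ![v 0, v 1]) fun w => by
    ext i
    fin_cases i <;> simp [fixedLatticeBasis, mulVec, dotProduct, Fin.sum_univ_two]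

theorem range_mulVecLin_fixedLatticeBasis :
    LinearMap.range fixedLatticeBasis.mulVecLin =
      LinearMap.ker (Tmat.mulVecLin - (LinearMap.id : (Fin 4 → ℤ) →ₗ[ℤ] Fin 4 → ℤ)) := by
  have hfix : Tmat * fixedLatticeBasis = fixedLatticeBasis := by decide
  ext v
  simp only [LinearMap.mem_range, LinearMap.mem_ker, LinearMap.sub_apply, LinearMap.id_apply,
    mulVecLin_apply, sub_eq_zero]
  constructor
  · rintro ⟨w, rfl⟩
    rw [mulVec_mulVec, hfix]
  · intro hv
    have h1 := congrFun hv 1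
    have h2 := congrFun hv 2
    have h3 := congrFun hv 3
    simp only [Tmat_mulVec, cons_val] at h1 h2 h3
    refine ⟨![v 0, v 1], funext fun i => ?_⟩
    fin_cases i <;> simp [fixedLatticeBasis, mulVec, dotProduct, Fin.sum_univ_two] <;> omega

theorem fixedLatticeBasis_transpose_mul_Pmat_mul :
    fixedLatticeBasisᵀ * Pmat * fixedLatticeBasis = !![2, -3; -3, 6] := by
  decide

/-- Lemma 3.3(2) : the form `P` is even, invariant under the order-3 action of `T`,
equivalent over `ℤ` to `H ⊕ H` (in particular unimodular), and its restriction to the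
rank-2 fixed sublattice of `T` is positive definite. -/
theorem stmt3 :
    (∀ v : Fin 4 → ℤ, ∃ a : ℤ, v ⬝ᵥ Pmat.mulVec v = 2 * a) ∧
    (Tmatᵀ * Pmat * Tmat = Pmat ∧ Tmat ^ 3 = 1) ∧
    (∃ U : Matrix (Fin 4) (Fin 4) ℤ, IsUnit U.det ∧ Uᵀ * Pmat * U = HHmat) ∧
    (Module.finrank ℤ
        (LinearMap.ker (Tmat.mulVecLin - (LinearMap.id : (Fin 4 → ℤ) →ₗ[ℤ] Fin 4 → ℤ))) = 2 ∧
      ∀ v : Fin 4 → ℤ, Tmat.mulVec v = v → v ≠ 0 → 0 < v ⬝ᵥ Pmat.mulVec v) := by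
  refine ⟨fun v => ?_, ⟨by decide, by decide⟩, exists_isUnit_det_transpose_mul_Pmat_mul_eq_HHmat,
    ?_, fun v hv hv0 => ?_⟩
  · obtain ⟨Q, hQ⟩ := exists_Pmat_eq_add_transpose
    exact ⟨_, hQ ▸ dotProduct_add_transpose_mulVec_self Q v⟩
  · rw [← range_mulVecLin_fixedLatticeBasis,
      LinearMap.finrank_range_of_inj mulVecLin_fixedLatticeBasis_injective, Module.finrank_fin_fun]
  · have hmem : v ∈ LinearMap.range fixedLatticeBasis.mulVecLin := by
      rw [range_mulVecLin_fixedLatticeBasis]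
      simpa [sub_eq_zero] using hv
    obtain ⟨w, rfl⟩ := hmem
    have hw : w ≠ 0 := by rintro rfl; simp at hv0
    rw [mulVecLin_apply, dotProduct_mulVec_mulVec_self, fixedLatticeBasis_transpose_mul_Pmat_mul]
    exact dotProduct_mulVec_fin_two_pos (by norm_num) (by norm_num) hw
end

section
/- Let q be a nonnegative integer, r = 16(5q+1), and k an integer with 0 ≤ k ≤ 16q+3. Let g : ℚ^r → ℚ^r be the linear map that cyclically permutes the coordinates within each of the k consecutive quintuples (x_1,...,x_5), (x_6,...,x_10), ..., (x_{5k-4},...,x_{5k}) and fixes all remaining coordinates. Then g maps Γ_r onto Γ_r, preserves the form B, satisfies g^5 = id, and Γ_r, regarded as a module over the group ring ℤ[ℤ/5ℤ] with a fixed generator acting as g, is isomorphic to the direct sum of k copies of ℤ[ℤ/5ℤ] and (r-5k) copies of ℤ with trivial action. -/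
open scoped BigOperators

/-- The lattice `Γ_r`: vectors `x ∈ ((1/2)ℤ)^r` with `x_i - x_j ∈ ℤ` for all `i, j` and
`x_1 + ⋯ + x_r ∈ 2ℤ`, viewed as a `ℤ`-submodule of `ℚ^r`. -/
def gammaLattice (r : ℕ) : Submodule ℤ (Fin r → ℚ) where
  carrier := {x | (∀ i, ∃ a : ℤ, 2 * x i = a) ∧ (∀ i j, ∃ a : ℤ, x i - x j = a) ∧
      (∃ a : ℤ, ∑ i, x i = 2 * a)}
  zero_mem' := ⟨fun _ => ⟨0, by simp⟩, fun _ _ => ⟨0, by simp⟩, ⟨0, by simp⟩⟩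
  add_mem' := by
    rintro x y ⟨hx1, hx2, hx3⟩ ⟨hy1, hy2, hy3⟩
    refine ⟨fun i => ?_, fun i j => ?_, ?_⟩
    · obtain ⟨a, ha⟩ := hx1 i; obtain ⟨b, hb⟩ := hy1 i
      refine ⟨a + b, ?_⟩
      push_cast
      simp only [Pi.add_apply]
      linarith
    · obtain ⟨a, ha⟩ := hx2 i j; obtain ⟨b, hb⟩ := hy2 i j
      refine ⟨a + b, ?_⟩
      push_cast
      simp only [Pi.add_apply]
      linarith
    · obtain ⟨a, ha⟩ := hx3; obtain ⟨b, hb⟩ := hy3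
      refine ⟨a + b, ?_⟩
      push_cast
      simp only [Pi.add_apply, Finset.sum_add_distrib]
      linarith
  smul_mem' := by
    rintro c x ⟨hx1, hx2, hx3⟩
    refine ⟨fun i => ?_, fun i j => ?_, ?_⟩
    · obtain ⟨a, ha⟩ := hx1 i
      refine ⟨c * a, ?_⟩
      simp only [Pi.smul_apply, zsmul_eq_mul]
      push_cast
      linear_combination (c : ℚ) * ha
    · obtain ⟨a, ha⟩ := hx2 i j
      refine ⟨c * a, ?_⟩
      simp only [Pi.smul_apply, zsmul_eq_mul]
      push_cast
      linear_combination (c : ℚ) * ha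
    · obtain ⟨a, ha⟩ := hx3
      refine ⟨c * a, ?_⟩
      simp only [Pi.smul_apply, zsmul_eq_mul, ← Finset.mul_sum]
      push_cast
      linear_combination (c : ℚ) * ha

/-- The bilinear form `B(x,y) = -(x_1 y_1 + ⋯ + x_r y_r)` on `ℚ^r`. -/
def gform (r : ℕ) (x y : Fin r → ℚ) : ℚ := -∑ i, x i * y i

/-- The permutation of `Fin r` cyclically permuting the indices within each of the first `k`
consecutive quintuples and fixing all remaining indices. -/
def sigma5 (r k : ℕ) (h : 5 * k ≤ r) : Fin r → Fin r := fun i =>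
  if hi : (i : ℕ) < 5 * k then
    ⟨5 * ((i : ℕ) / 5) + (((i : ℕ) % 5 + 1) % 5), by omega⟩
  else i

/-- The linear map on `ℚ^r` cyclically permuting the coordinates within each of the first `k`
consecutive quintuples `(x_1,…,x_5), …, (x_{5k-4},…,x_{5k})` and fixing all remaining
coordinates. -/
def g5 (r k : ℕ) (h : 5 * k ≤ r) (x : Fin r → ℚ) : Fin r → ℚ := fun i => x (sigma5 r k h i)

/-!
Index the coordinates by `(Fin k × ℤ/5) ⊕ Fin (r - 5k)`, so that `g` cycles the `ℤ/5` coordinate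
of each block. Fix an anchor `ℓ` among the fixed coordinates. Since `4 ∣ r`, every `x ∈ Γ_r` is
uniquely `(n/2)·𝟙 + a` with `n ∈ ℤ` and `a` integral, `a_ℓ = 0`, `∑ a` even. On a single block the
even-sum vectors form a free `ℤ[ℤ/5]`-module generated by `e_0 + e_1`, because the circulant
`1 + t` has determinant `2`; one distinguished block `j₀` absorbs the parity of all the other
coordinates. This gives a `g`-permuted basis of `Γ_r`: `e_{j₀,i} + e_{j₀,i+1}`,
`e_{j,i} - e_{j₀,i}` for `j ≠ j₀`, `e_t - ∑_z e_{j₀,z}` for `t ≠ ℓ`, and `𝟙/2`.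
-/

open Finset

def IsGammaVector {ι : Type*} [Fintype ι] (x : ι → ℚ) : Prop :=
  (∀ i, ∃ a : ℤ, 2 * x i = a) ∧ (∀ i j, ∃ a : ℤ, x i - x j = a) ∧ ∃ a : ℤ, ∑ i, x i = 2 * a

theorem mem_gammaLattice_iff {r : ℕ} {x : Fin r → ℚ} : x ∈ gammaLattice r ↔ IsGammaVector x :=
  Iff.rfl

section IsGammaVector

variable {ι κ : Type*} [Fintype ι] [Fintype κ]

theorem IsGammaVector.comp_equiv {x : ι → ℚ} (hx : IsGammaVector x) (e : κ ≃ ι) :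
    IsGammaVector (x ∘ e) := by
  obtain ⟨hhalf, hdiff, a, hsum⟩ := hx
  exact ⟨fun i => hhalf (e i), fun i j => hdiff (e i) (e j), a, by rw [← hsum]; exact e.sum_comp x⟩

theorem isGammaVector_half_add (h4 : 4 ∣ Fintype.card ι) (n : ℤ) (a : ι → ℤ)
    (ha : Even (∑ i, a i)) : IsGammaVector fun i => (n : ℚ) / 2 + a i := by
  obtain ⟨c, hc⟩ := h4
  obtain ⟨d, hd⟩ := ha
  refine ⟨fun i => ⟨n + 2 * a i, by push_cast; ring⟩, fun i j => ⟨a i - a j, by push_cast; ring⟩,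
    c * n + d, ?_⟩
  have hd' : ∑ i, (a i : ℚ) = d + d := by exact_mod_cast hd
  rw [sum_add_distrib, sum_const, card_univ, hc, hd', nsmul_eq_mul]
  push_cast
  ring

theorem IsGammaVector.exists_eq_half_add (h4 : 4 ∣ Fintype.card ι) {x : ι → ℚ}
    (hx : IsGammaVector x) (ℓ : ι) :
    ∃ (n : ℤ) (a : ι → ℤ), a ℓ = 0 ∧ Even (∑ i, a i) ∧ x = fun i => (n : ℚ) / 2 + a i := by
  obtain ⟨hhalf, hdiff, s, hs⟩ := hx
  obtain ⟨n, hn⟩ := hhalf ℓ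
  choose a ha using fun i => hdiff i ℓ
  obtain ⟨c, hc⟩ := h4
  have hx : x = fun i => (n : ℚ) / 2 + a i := funext fun i => by rw [← ha, ← hn]; ring
  refine ⟨n, a, by exact_mod_cast (ha ℓ).symm.trans (sub_self _), ⟨s - c * n, ?_⟩, hx⟩
  rw [hx, sum_add_distrib, sum_const, card_univ, hc, nsmul_eq_mul] at hs
  have hsum : ∑ i, (a i : ℚ) = ((s - c * n : ℤ) : ℚ) + (s - c * n : ℤ) := by
    push_cast at hs ⊢
    linear_combination hs
  exact_mod_cast hsum

end IsGammaVector

section AdjacentSum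

def adjacentSum {R : Type*} [Add R] (b : ZMod 5 → R) (z : ZMod 5) : R := b z + b (z - 1)

theorem sum_zmod_five_eq {R : Type*} [AddCommMonoid R] (u : ZMod 5 → R) (z : ZMod 5) :
    ∑ w, u w = u z + u (z - 1) + u (z - 2) + u (z - 3) + u (z - 4) := by
  calc ∑ w, u w = ∑ w, u (z - w) := (Fintype.sum_equiv (Equiv.subLeft z) _ _ fun _ => rfl).symm
    _ = u (z - 0) + u (z - 1) + u (z - 2) + u (z - 3) + u (z - 4) := Fin.sum_univ_five _
    _ = _ := by rw [sub_zero]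

theorem sum_adjacentSum (b : ZMod 5 → ℤ) : ∑ z, adjacentSum b z = 2 * ∑ z, b z := by
  have hshift : ∑ z, b (z - 1) = ∑ z, b z := Fintype.sum_equiv (Equiv.subRight 1) _ _ fun _ => rfl
  simp only [adjacentSum, sum_add_distrib, hshift]
  ring

theorem adjacentSum_injective : Function.Injective (adjacentSum (R := ℤ)) := by
  intro b b' h
  funext z
  -- `(1 - t + t² - t³ + t⁴) (1 + t) = 2` in `ℤ[ℤ/5]`
  have key (c : ZMod 5 → ℤ) : 2 * c z = adjacentSum c z - adjacentSum c (z - 1)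
      + adjacentSum c (z - 2) - adjacentSum c (z - 3) + adjacentSum c (z - 4) := by
    have h5 : z - 4 - 1 = z := by rw [sub_sub, show (4 + 1 : ZMod 5) = 0 from rfl, sub_zero]
    simp only [adjacentSum, h5, show z - 1 - 1 = z - 2 by ring, show z - 2 - 1 = z - 3 by ring,
      show z - 3 - 1 = z - 4 by ring]
    ring
  have := key b
  rw [h, ← key b'] at this
  omega

theorem exists_adjacentSum_eq (u : ZMod 5 → ℤ) (hu : Even (∑ z, u z)) :
    ∃ b, adjacentSum b = u := by
  obtain ⟨d, hd⟩ := hu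
  -- `(1 + t)⁻¹ = N / 2 - t - t³` in `ℚ[ℤ/5]`, where `N = ∑ tⁱ`
  refine ⟨fun i => d - u (i - 1) - u (i - 3), funext fun z => ?_⟩
  have := sum_zmod_five_eq u z
  simp only [adjacentSum, show z - 1 - 1 = z - 2 by ring, show z - 1 - 3 = z - 4 by ring]
  linarith

end AdjacentSum

section Blocks

variable {K M : Type*}

def cycleBlocks : Equiv.Perm ((K × ZMod 5) ⊕ M) :=
  Equiv.sumCongr (Equiv.prodCongr (Equiv.refl K) (Equiv.subRight 1)) (Equiv.refl M)

@[simp]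
theorem cycleBlocks_inl (j : K) (z : ZMod 5) :
    cycleBlocks (.inl (j, z) : (K × ZMod 5) ⊕ M) = .inl (j, z - 1) := rfl

@[simp]
theorem cycleBlocks_inr (t : M) : cycleBlocks (.inr t : (K × ZMod 5) ⊕ M) = .inr t := rfl

theorem cycleBlocks_five (p : (K × ZMod 5) ⊕ M) :
    cycleBlocks (cycleBlocks (cycleBlocks (cycleBlocks (cycleBlocks p)))) = p := by
  have h5 : ∀ z : ZMod 5, z - 1 - 1 - 1 - 1 - 1 = z := by decide
  rcases p with ⟨j, z⟩ | t <;> simp [h5]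

def rotate (y : (K → ZMod 5 → ℤ) × (M → ℤ)) : (K → ZMod 5 → ℤ) × (M → ℤ) :=
  (fun j i => y.1 j (i - 1), y.2)

variable [Fintype K] [Fintype M]

-- `none : Option K` is the block `j₀` absorbing the parity and `none : Option M` is the anchor
-- `ℓ`; `ofCoords` sends the standard basis to the basis of `Γ_r` listed at the top.
def integralPart (y : (Option K → ZMod 5 → ℤ) × (Option M → ℤ)) :
    (Option K × ZMod 5) ⊕ Option M → ℤ
  | .inl (some j, z) => y.1 (some j) z
  | .inl (none, z) => adjacentSum (y.1 none) z - ∑ j, y.1 (some j) z - ∑ t, y.2 (some t)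
  | .inr (some t) => y.2 (some t)
  | .inr none => 0

def ofCoords :
    ((Option K → ZMod 5 → ℤ) × (Option M → ℤ)) →ₗ[ℤ] ((Option K × ZMod 5) ⊕ Option M → ℚ) :=
  AddMonoidHom.toIntLinearMap <|
    AddMonoidHom.mk' (fun y i => (y.2 none : ℚ) / 2 + integralPart y i) fun y y' => by
      funext i
      rcases i with ⟨_ | j, z⟩ | _ | t <;>
        simp only [integralPart, adjacentSum, Prod.fst_add, Prod.snd_add, Pi.add_apply,
          sum_add_distrib, Int.cast_add, Int.cast_sub, Int.cast_sum, Int.cast_zero] <;> ring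

theorem ofCoords_apply (y : (Option K → ZMod 5 → ℤ) × (Option M → ℤ))
    (i : (Option K × ZMod 5) ⊕ Option M) :
    ofCoords y i = (y.2 none : ℚ) / 2 + integralPart y i := rfl

theorem even_sum_integralPart (y : (Option K → ZMod 5 → ℤ) × (Option M → ℤ)) :
    Even (∑ i, integralPart y i) := by
  refine ⟨∑ z, y.1 none z - 2 * ∑ t, y.2 (some t), ?_⟩
  simp only [Fintype.sum_sum_type, Fintype.sum_prod_type, Fintype.sum_option, integralPart,
    sum_sub_distrib, sum_adjacentSum, sum_const, card_univ, ZMod.card]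
  rw [sum_comm (γ := ZMod 5)]
  ring

theorem isGammaVector_ofCoords (h4 : 4 ∣ Fintype.card ((Option K × ZMod 5) ⊕ Option M))
    (y : (Option K → ZMod 5 → ℤ) × (Option M → ℤ)) : IsGammaVector (ofCoords y) :=
  isGammaVector_half_add h4 _ _ (even_sum_integralPart y)

theorem ofCoords_injective : Function.Injective (ofCoords (K := K) (M := M)) := by
  rw [injective_iff_map_eq_zero]
  intro y hy
  have hn : y.2 none = 0 := by
    simpa [ofCoords_apply, integralPart] using congrFun hy (.inr none)
  have hint (i) : integralPart y i = 0 := by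
    simpa [ofCoords_apply, hn] using congrFun hy i
  have hb (j z) : y.1 (some j) z = 0 := hint (.inl (some j, z))
  have hc (t) : y.2 (some t) = 0 := hint (.inr (some t))
  have hb0 : y.1 none = 0 := adjacentSum_injective <| funext fun z => by
    simpa [integralPart, hb, hc, adjacentSum] using hint (.inl (none, z))
  refine Prod.ext (funext fun j => ?_) (funext fun t => ?_)
  · cases j with
    | none => exact hb0
    | some j => exact funext (hb j)
  · cases t with
    | none => exact hn
    | some t => exact hc t

theorem exists_ofCoords_eq (h4 : 4 ∣ Fintype.card ((Option K × ZMod 5) ⊕ Option M))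
    {x : (Option K × ZMod 5) ⊕ Option M → ℚ} (hx : IsGammaVector x) : ∃ y, ofCoords y = x := by
  obtain ⟨n, a, ha0, ha, rfl⟩ := hx.exists_eq_half_add h4 (.inr none)
  set u : ZMod 5 → ℤ := fun z => ∑ j, a (.inl (j, z)) + ∑ t, a (.inr (some t))
  have hu : ∑ z, u z = ∑ i, a i + 2 * (2 * ∑ t, a (.inr (some t))) := by
    simp only [u, sum_add_distrib, Fintype.sum_sum_type, Fintype.sum_prod_type, Fintype.sum_option,
      ha0, sum_const, card_univ, ZMod.card]
    rw [sum_comm (γ := ZMod 5)]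
    ring
  obtain ⟨b, hb⟩ := exists_adjacentSum_eq u (hu ▸ ha.add (even_two_mul _))
  refine ⟨(fun j => j.elim b fun j z => a (.inl (some j, z)),
    fun t => t.elim n fun t => a (.inr (some t))), funext fun i => ?_⟩
  rcases i with ⟨_ | j, z⟩ | _ | t
  · simp only [ofCoords_apply, integralPart, hb, u, Fintype.sum_option, Option.elim_none,
      Option.elim_some, Int.cast_sub, Int.cast_add, Int.cast_sum]
    ring
  all_goals simp [ofCoords_apply, integralPart, ha0]

theorem ofCoords_rotate (y : (Option K → ZMod 5 → ℤ) × (Option M → ℤ)) :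
    ofCoords (rotate y) = ofCoords y ∘ cycleBlocks := by
  funext i
  rcases i with ⟨_ | j, z⟩ | _ | t <;> rfl

end Blocks

section FinBlocks

variable {r k m : ℕ}

-- The sign in `(j, z) ↦ 5j + (-z)` turns `g5` into `z ↦ z - 1`, the shift made by `rotate`.
def blockEquiv (hkm : 5 * k + m = r) : (Fin k × ZMod 5) ⊕ Fin m ≃ Fin r :=
  (Equiv.sumCongr ((Equiv.prodCongr (Equiv.refl (Fin k)) (Equiv.neg (ZMod 5))).trans
    (finProdFinEquiv (m := k) (n := 5))) (Equiv.refl (Fin m))).trans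
    (finSumFinEquiv.trans (finCongr (by omega)))

theorem blockEquiv_inl_val (hkm : 5 * k + m = r) (j : Fin k) (z : ZMod 5) :
    (blockEquiv hkm (.inl (j, z)) : ℕ) = 5 * j + (-z).val := by
  show (-z : ZMod 5).val + 5 * j = _
  ring

theorem blockEquiv_inr_val (hkm : 5 * k + m = r) (t : Fin m) :
    (blockEquiv hkm (.inr t) : ℕ) = 5 * k + t := by
  show k * 5 + (t : ℕ) = _
  ring

theorem sigma5_blockEquiv (h : 5 * k ≤ r) (hkm : 5 * k + m = r) (p : (Fin k × ZMod 5) ⊕ Fin m) :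
    sigma5 r k h (blockEquiv hkm p) = blockEquiv hkm (cycleBlocks p) := by
  apply Fin.ext
  rcases p with ⟨j, z⟩ | t
  · have hz : (-(z - 1)).val = ((-z).val + 1) % 5 := by revert z; decide
    have := ZMod.val_lt (-z)
    have hj := j.isLt
    rw [sigma5, dif_pos (by rw [blockEquiv_inl_val]; omega), cycleBlocks_inl]
    simp only [blockEquiv_inl_val, hz]
    omega
  · rw [sigma5, dif_neg (by rw [blockEquiv_inr_val]; omega), cycleBlocks_inr]

theorem sigma5_eq_permCongr (h : 5 * k ≤ r) :
    sigma5 r k h = (blockEquiv (Nat.add_sub_of_le h)).permCongr cycleBlocks := by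
  funext i
  obtain ⟨p, rfl⟩ := (blockEquiv (Nat.add_sub_of_le h)).surjective i
  simp [sigma5_blockEquiv]

theorem g5_mem_gammaLattice (h : 5 * k ≤ r) {x : Fin r → ℚ} (hx : x ∈ gammaLattice r) :
    g5 r k h x ∈ gammaLattice r := by
  show IsGammaVector (x ∘ sigma5 r k h)
  rw [sigma5_eq_permCongr]
  exact IsGammaVector.comp_equiv hx _

theorem gform_g5 (h : 5 * k ≤ r) (x y : Fin r → ℚ) :
    gform r (g5 r k h x) (g5 r k h y) = gform r x y := by
  simp only [gform, g5, sigma5_eq_permCongr]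
  rw [Equiv.sum_comp _ fun i => x i * y i]

theorem g5_comp_five (h : 5 * k ≤ r) :
    g5 r k h ∘ g5 r k h ∘ g5 r k h ∘ g5 r k h ∘ g5 r k h = id := by
  funext x i
  obtain ⟨p, rfl⟩ := (blockEquiv (Nat.add_sub_of_le h)).surjective i
  simp only [Function.comp_apply, g5, sigma5_blockEquiv, cycleBlocks_five, id]

end FinBlocks

theorem exists_linearEquiv_comm_of_range_eq {R T V : Type*} [Semiring R] [AddCommMonoid T]
    [AddCommMonoid V] [Module R T] [Module R V] (Ψ : T →ₗ[R] V) (hΨ : Function.Injective Ψ)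
    {L : Submodule R V} (hL : LinearMap.range Ψ = L) {g : V → V} {s : T → T}
    (hgs : ∀ y, Ψ (s y) = g (Ψ y)) :
    ∃ e : L ≃ₗ[R] T, ∀ (x : L) (hx : g x ∈ L), e ⟨g x, hx⟩ = s (e x) := by
  let E := (LinearEquiv.ofInjective Ψ hΨ).trans (LinearEquiv.ofEq _ _ hL)
  refine ⟨E.symm, fun x hx => E.symm_apply_eq.2 (Subtype.ext ?_)⟩
  have hx : Ψ (E.symm x) = x := congrArg Subtype.val (E.apply_symm_apply x)
  exact (congrArg g hx).symm.trans (hgs _).symm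

theorem exists_gammaLattice_equiv_of_equiv {r : ℕ} {K M : Type*} [Fintype K] [Fintype M]
    (h4 : 4 ∣ r) (idx : (Option K × ZMod 5) ⊕ Option M ≃ Fin r)
    {g : (Fin r → ℚ) → Fin r → ℚ} (hg : ∀ x, g x ∘ idx = x ∘ idx ∘ cycleBlocks) :
    ∃ e : gammaLattice r ≃ₗ[ℤ] (Option K → ZMod 5 → ℤ) × (Option M → ℤ),
      ∀ (x : gammaLattice r) (hx : g x ∈ gammaLattice r), e ⟨g x, hx⟩ = rotate (e x) := by
  have h4' : 4 ∣ Fintype.card ((Option K × ZMod 5) ⊕ Option M) := by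
    rwa [Fintype.card_congr idx, Fintype.card_fin]
  refine exists_linearEquiv_comm_of_range_eq
    ((LinearEquiv.funCongrLeft ℤ ℚ idx.symm).toLinearMap ∘ₗ ofCoords)
    (by simpa using (LinearEquiv.funCongrLeft ℤ ℚ idx.symm).injective.comp ofCoords_injective)
    ?_ fun y => ?_
  · ext x
    simp only [LinearMap.mem_range, LinearMap.coe_comp, Function.comp_apply,
      LinearEquiv.coe_coe, LinearEquiv.funCongrLeft_apply]
    rw [mem_gammaLattice_iff]
    constructor
    · rintro ⟨y, rfl⟩
      exact (isGammaVector_ofCoords h4' y).comp_equiv idx.symm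
    · intro hx
      obtain ⟨y, hy⟩ := exists_ofCoords_eq h4' (hx.comp_equiv idx)
      exact ⟨y, by rw [hy]; ext; simp⟩
  · funext i
    obtain ⟨p, rfl⟩ := idx.surjective i
    have hgp := congrFun (hg (ofCoords y ∘ idx.symm)) p
    simp only [LinearMap.coe_comp, LinearEquiv.coe_coe, Function.comp_apply,
      LinearEquiv.funCongrLeft_apply, LinearMap.funLeft_apply, Equiv.symm_apply_apply,
      ofCoords_rotate] at hgp ⊢
    exact hgp.symm

theorem exists_gammaLattice_equiv {r k : ℕ} (h4 : 4 ∣ r) (hk : 0 < k) (hkr : 5 * k < r)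
    (h : 5 * k ≤ r) :
    ∃ e : gammaLattice r ≃ₗ[ℤ] (Fin k → ZMod 5 → ℤ) × (Fin (r - 5 * k) → ℤ),
      ∀ (x : gammaLattice r) (hx : g5 r k h x.1 ∈ gammaLattice r),
        e ⟨g5 r k h x.1, hx⟩ = rotate (e x) := by
  obtain ⟨k, rfl⟩ := Nat.exists_eq_add_one_of_ne_zero hk.ne'
  obtain ⟨m, hm⟩ : ∃ m, r - 5 * (k + 1) = m + 1 := ⟨r - 5 * (k + 1) - 1, by omega⟩
  let eK : Option (Fin k) ≃ Fin (k + 1) := (finSuccEquiv k).symm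
  let eM : Option (Fin m) ≃ Fin (r - 5 * (k + 1)) :=
    (finSuccEquiv m).symm.trans (finCongr hm.symm)
  let eBlocks := Equiv.sumCongr (Equiv.prodCongr eK (Equiv.refl (ZMod 5))) eM
  obtain ⟨e, he⟩ := exists_gammaLattice_equiv_of_equiv h4
    (eBlocks.trans (blockEquiv (Nat.add_sub_of_le h))) (g := g5 r (k + 1) h) fun x => by
      funext p
      have hcomm : eBlocks (cycleBlocks p) = cycleBlocks (eBlocks p) := by
        rcases p with ⟨j, z⟩ | t <;> rfl
      simp [g5, sigma5_blockEquiv, hcomm]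
  refine ⟨e.trans ((LinearEquiv.funCongrLeft ℤ _ eK).prodCongr
    (LinearEquiv.funCongrLeft ℤ ℤ eM)).symm, fun x hx => ?_⟩
  rw [LinearEquiv.trans_apply, he]
  rfl

-- `g5` is trivial for `k = 0`, and the case `k = 1` provides a `ℤ`-basis of rank `r`.
theorem exists_gammaLattice_equiv_zero {r : ℕ} (h4 : 4 ∣ r) (hr : 5 < r) (h : 5 * 0 ≤ r) :
    ∃ e : gammaLattice r ≃ₗ[ℤ] (Fin 0 → ZMod 5 → ℤ) × (Fin (r - 5 * 0) → ℤ),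
      ∀ (x : gammaLattice r) (hx : g5 r 0 h x.1 ∈ gammaLattice r),
        e ⟨g5 r 0 h x.1, hx⟩ = rotate (e x) := by
  obtain ⟨e, -⟩ := exists_gammaLattice_equiv h4 one_pos (by omega) (by omega : 5 * 1 ≤ r)
  have hrank : Module.finrank ℤ ((Fin 1 → ZMod 5 → ℤ) × (Fin (r - 5 * 1) → ℤ))
      = Module.finrank ℤ ((Fin 0 → ZMod 5 → ℤ) × (Fin (r - 5 * 0) → ℤ)) := by
    simp [Module.finrank_pi_fintype, Nat.add_sub_cancel' (by omega : 5 ≤ r)]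
  refine ⟨e.trans (LinearEquiv.ofFinrankEq _ _ hrank), fun x hx => ?_⟩
  have hg : g5 r 0 h x.1 = x.1 := by
    funext i
    simp [g5, sigma5]
  simp only [hg]
  exact Prod.ext (funext fun j => j.elim0) rfl

/-- Lemma 4.2 : for `r = 16(5q+1)` and `0 ≤ k ≤ 16q+3`, the quintuple-cycling map `g` preserves
`Γ_r` and the form `B`, has order dividing `5`, and `Γ_r` as a `ℤ[ℤ/5ℤ]`-module (a generator
acting as `g`) is isomorphic to `k` copies of `ℤ[ℤ/5ℤ]` plus `r - 5k` trivial copies of `ℤ`. -/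
theorem stmt5 (q r k : ℕ) (hr : r = 16 * (5 * q + 1)) (hk : k ≤ 16 * q + 3)
    (h : 5 * k ≤ r) :
    (∀ x ∈ gammaLattice r, g5 r k h x ∈ gammaLattice r) ∧
    (∀ x y : Fin r → ℚ, gform r (g5 r k h x) (g5 r k h y) = gform r x y) ∧
    (g5 r k h ∘ g5 r k h ∘ g5 r k h ∘ g5 r k h ∘ g5 r k h = id) ∧
    ∃ e : gammaLattice r ≃ₗ[ℤ] ((Fin k → (ZMod 5 → ℤ)) × (Fin (r - 5 * k) → ℤ)),
      ∀ (x : gammaLattice r) (hx : g5 r k h x.1 ∈ gammaLattice r),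
        e ⟨g5 r k h x.1, hx⟩ = ((fun j i => (e x).1 j (i - 1)), (e x).2) := by
  have h4 : 4 ∣ r := ⟨4 * (5 * q + 1), by omega⟩
  refine ⟨fun x hx => g5_mem_gammaLattice h hx, gform_g5 h, g5_comp_five h, ?_⟩
  rcases Nat.eq_zero_or_pos k with rfl | hk0
  · exact exists_gammaLattice_equiv_zero h4 (by omega) h
  · exact exists_gammaLattice_equiv h4 hk0 (by omega) h
end

section
/- Let S be the set of 6-tuples (m11, m22, m12, m13, m14, m23) of nonnegative integers satisfying: m11+m22+m12+m13+m14+m23 ≤ 24; m11+m22+m12+m13+m14+m23 ≡ 4 (mod 5); -m11-m22+m14+m23 ≡ 4 (mod 5); -m11+3m22-m12+m13+m14-3m23 ≡ 1 (mod 5); 3m11-m22+m12-m13-3m14+m23 ≡ 1 (mod 5); and both b_+ = (1/5)(4 + 2m12 + 2m13 + 4m14 + 4m23) - 1 and b_- = (1/5)(20 + 4m11 + 4m22 + 2m12 + 2m13) - 1 are integers with 0 ≤ b_+ ≤ 3 and 0 ≤ b_- ≤ 19. Let τ be the involution of 6-tuples that swaps m11 with m22, m12 with m13, and m14 with m23.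 Then τ(S) = S and the number of orbits of τ acting on S is exactly 285. -/
/-- The constraints of Proposition 4.1 on the fixed point data of a locally linear pseudofree
`ℤ/5`-action on a K3 surface (`e = 24`, `s = -16`, `b₊ = 3`, `b₋ = 19`). -/
def K3Z5Cond (m11 m22 m12 m13 m14 m23 : ℕ) : Prop :=
  m11 + m22 + m12 + m13 + m14 + m23 ≤ 24 ∧
  m11 + m22 + m12 + m13 + m14 + m23 ≡ 4 [MOD 5] ∧
  (-(m11 : ℤ) - m22 + m14 + m23) ≡ 4 [ZMOD 5] ∧
  (-(m11 : ℤ) + 3 * m22 - m12 + m13 + m14 - 3 * m23) ≡ 1 [ZMOD 5] ∧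
  (3 * (m11 : ℤ) - m22 + m12 - m13 - 3 * m14 + m23) ≡ 1 [ZMOD 5] ∧
  (∃ bp : ℤ, (bp : ℚ) = 1/5 * (4 + 2 * m12 + 2 * m13 + 4 * m14 + 4 * m23) - 1 ∧
    0 ≤ bp ∧ bp ≤ 3) ∧
  (∃ bm : ℤ, (bm : ℚ) = 1/5 * (20 + 4 * m11 + 4 * m22 + 2 * m12 + 2 * m13) - 1 ∧
    0 ≤ bm ∧ bm ≤ 19)

/-- The set `S` of 6-tuples `(m₁₁, m₂₂, m₁₂, m₁₃, m₁₄, m₂₃)` satisfying the constraints. -/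
def K3Z5Set : Set (ℕ × ℕ × ℕ × ℕ × ℕ × ℕ) :=
  {m | K3Z5Cond m.1 m.2.1 m.2.2.1 m.2.2.2.1 m.2.2.2.2.1 m.2.2.2.2.2}

/-- The involution `τ` swapping `m₁₁ ↔ m₂₂`, `m₁₂ ↔ m₁₃` and `m₁₄ ↔ m₂₃` (induced by
replacing the generator `g` by `g²`). -/
def tauInv (m : ℕ × ℕ × ℕ × ℕ × ℕ × ℕ) : ℕ × ℕ × ℕ × ℕ × ℕ × ℕ :=
  (m.2.1, m.1, m.2.2.2.1, m.2.2.1, m.2.2.2.2.2, m.2.2.2.2.1)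

/-!
`τ` is an involution preserving the constraints, so each of its orbits on `S` has exactly one
point `x` with `x ≤ τ x` in the lexicographic order. Once the integrality of `b₊` and `b₋` is
rewritten as divisibility, membership in `S` is decidable; `b₊ ≤ 3` confines
`(m₁₂, m₁₃, m₁₄, m₂₃)` to a small box, and a kernel computation over the remaining candidates
finds 563 points of `S`, of which 285 are lexicographically minimal in their orbit.
-/

open Finset

theorem Function.Involutive.image_eq_of_mapsTo {α : Type*} {τ : α → α} (hτ : τ.Involutive)
    {S : Set α} (hS : Set.MapsTo τ S S) : τ '' S = S :=
  hS.image_subset.antisymm (by rw [hτ.image_eq_preimage_symm]; exact hS)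

theorem Function.Involutive.ncard_orbits_eq_ncard_le {α β : Type*} [LinearOrder β] {τ : α → α}
    (hτ : τ.Involutive) {S : Set α} (hS : Set.MapsTo τ S S) {f : α → β}
    (hf : Function.Injective f) :
    {Q : Set α | ∃ x ∈ S, Q = {x, τ x}}.ncard = {x ∈ S | f x ≤ f (τ x)}.ncard := by
  have horbits : {Q : Set α | ∃ x ∈ S, Q = {x, τ x}} =
      (fun x => ({x, τ x} : Set α)) '' {x ∈ S | f x ≤ f (τ x)} := by
    ext Q
    constructor
    · rintro ⟨x, hx, rfl⟩
      rcases le_total (f x) (f (τ x)) with hle | hle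
      · exact ⟨x, ⟨hx, hle⟩, rfl⟩
      · refine ⟨τ x, ⟨hS hx, by rwa [hτ x]⟩, ?_⟩
        simp only [hτ x, Set.pair_comm]
    · rintro ⟨x, ⟨hx, -⟩, rfl⟩
      exact ⟨x, hx, rfl⟩
  rw [horbits, Set.InjOn.ncard_image]
  rintro r ⟨-, hr⟩ s ⟨-, hs⟩ hrs
  have hr_mem : r ∈ ({s, τ s} : Set α) := (Set.ext_iff.mp hrs r).mp (Set.mem_insert r _)
  rcases hr_mem with rfl | rfl
  · rfl
  · rw [hτ s] at hr
    exact (hf (le_antisymm hs hr)).symm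

theorem exists_int_eq_one_div_mul_sub_one_iff {n N : ℕ} (hn : 0 < n) (B : ℕ) :
    (∃ b : ℤ, (b : ℚ) = 1 / n * N - 1 ∧ 0 ≤ b ∧ b ≤ B) ↔ n ∣ N ∧ n ≤ N ∧ N ≤ n * (B + 1) := by
  have hn' : (n : ℚ) ≠ 0 := by positivity
  constructor
  · rintro ⟨b, hb, hb0, hbB⟩
    lift b to ℕ using hb0
    have hN : N = n * (b + 1) := by
      rw [eq_sub_iff_add_eq, one_div, inv_mul_eq_div, eq_div_iff hn'] at hb
      exact_mod_cast hb.symm.trans (mul_comm _ _)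
    subst hN
    exact ⟨dvd_mul_right _ _, Nat.le_mul_of_pos_right n b.succ_pos,
      Nat.mul_le_mul_left n (by omega)⟩
  · rintro ⟨⟨k, rfl⟩, hnk, hkB⟩
    have hk : 1 ≤ k := Nat.le_of_mul_le_mul_left (by simpa using hnk) hn
    refine ⟨k - 1, ?_, by omega, by linarith [Nat.le_of_mul_le_mul_left hkB hn]⟩
    push_cast
    field_simp

/-- Decidable form of `K3Z5Cond`: the congruences with nonnegative coefficients, and the
integrality of `b₊ = N₊ / 5 - 1`, `b₋ = N₋ / 5 - 1` as `5 ∣ N₊`, `5 ∣ N₋`. -/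
def K3Z5CondNat (a b c d e f : ℕ) : Prop :=
  a + b + c + d + e + f ≤ 24 ∧ (a + b + c + d + e + f) % 5 = 4 ∧
  (4 * a + 4 * b + e + f) % 5 = 4 ∧
  (4 * a + 3 * b + 4 * c + d + e + 2 * f) % 5 = 1 ∧
  (3 * a + 4 * b + c + 4 * d + 2 * e + f) % 5 = 1 ∧
  5 ∣ 4 + 2 * c + 2 * d + 4 * e + 4 * f ∧ 4 + 2 * c + 2 * d + 4 * e + 4 * f ≤ 20 ∧
  5 ∣ 20 + 4 * a + 4 * b + 2 * c + 2 * d ∧ 20 + 4 * a + 4 * b + 2 * c + 2 * d ≤ 100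

instance (a b c d e f : ℕ) : Decidable (K3Z5CondNat a b c d e f) := by
  unfold K3Z5CondNat; infer_instance

theorem k3Z5Cond_iff_condNat (a b c d e f : ℕ) :
    K3Z5Cond a b c d e f ↔ K3Z5CondNat a b c d e f := by
  have hbp := exists_int_eq_one_div_mul_sub_one_iff (n := 5)
    (N := 4 + 2 * c + 2 * d + 4 * e + 4 * f) (by norm_num) 3
  have hbm := exists_int_eq_one_div_mul_sub_one_iff (n := 5)
    (N := 20 + 4 * a + 4 * b + 2 * c + 2 * d) (by norm_num) 19
  push_cast at hbp hbm
  unfold K3Z5Cond K3Z5CondNat Nat.ModEq Int.ModEq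
  rw [hbp, hbm]
  omega

theorem k3Z5Cond_swap (a b c d e f : ℕ) : K3Z5Cond b a d c f e ↔ K3Z5Cond a b c d e f := by
  simp only [k3Z5Cond_iff_condNat, K3Z5CondNat]
  omega

theorem tauInv_involutive : Function.Involutive tauInv := fun _ => rfl

theorem mapsTo_tauInv_K3Z5Set : Set.MapsTo tauInv K3Z5Set K3Z5Set :=
  fun _ hm => (k3Z5Cond_swap ..).mpr hm

/-- The `(m₁₂, m₁₃, m₁₄, m₂₃)` for which `b₊` is an integer in `[0, 3]`; that bound
gives the box. -/
def bPlusData : Finset (ℕ × ℕ × ℕ × ℕ) :=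
  (range 9 ×ˢ range 9 ×ˢ range 5 ×ˢ range 5).filter fun x =>
    5 ∣ 4 + 2 * x.1 + 2 * x.2.1 + 4 * x.2.2.1 + 4 * x.2.2.2 ∧
      4 + 2 * x.1 + 2 * x.2.1 + 4 * x.2.2.1 + 4 * x.2.2.2 ≤ 20

def K3Z5Finset : Finset (ℕ × ℕ × ℕ × ℕ × ℕ × ℕ) :=
  (range 25 ×ˢ range 25 ×ˢ bPlusData).filter fun m =>
    K3Z5CondNat m.1 m.2.1 m.2.2.1 m.2.2.2.1 m.2.2.2.2.1 m.2.2.2.2.2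

theorem coe_K3Z5Finset : (K3Z5Finset : Set (ℕ × ℕ × ℕ × ℕ × ℕ × ℕ)) = K3Z5Set := by
  ext ⟨a, b, c, d, e, f⟩
  simp only [K3Z5Finset, bPlusData, coe_filter, mem_product, mem_filter, mem_range, K3Z5Set,
    k3Z5Cond_iff_condNat, Set.mem_ofPred_eq]
  unfold K3Z5CondNat
  omega

def tupleList (m : ℕ × ℕ × ℕ × ℕ × ℕ × ℕ) : List ℕ :=
  [m.1, m.2.1, m.2.2.1, m.2.2.2.1, m.2.2.2.2.1, m.2.2.2.2.2]

theorem tupleList_injective : Function.Injective tupleList := by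
  rintro ⟨a, b, c, d, e, f⟩ ⟨a', b', c', d', e', f'⟩ h
  simp_all [tupleList]

theorem card_filter_tupleList_le_K3Z5Finset :
    (K3Z5Finset.filter fun m => tupleList m ≤ tupleList (tauInv m)).card = 285 := by
  decide +kernel

/-- Theorem 1.8(1): `τ` preserves `S`, and `τ` has exactly `285` orbits on `S`
(the classification of locally linear pseudofree `ℤ/5`-actions on a K3 surface into
`285` classes, weakly equivalent classes being identified). -/
theorem stmt13 :
    tauInv '' K3Z5Set = K3Z5Set ∧
    {Q : Set (ℕ × ℕ × ℕ × ℕ × ℕ × ℕ) | ∃ x ∈ K3Z5Set, Q = {x, tauInv x}}.ncard = 285 := by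
  refine ⟨tauInv_involutive.image_eq_of_mapsTo mapsTo_tauInv_K3Z5Set, ?_⟩
  rw [tauInv_involutive.ncard_orbits_eq_ncard_le mapsTo_tauInv_K3Z5Set tupleList_injective,
    ← coe_K3Z5Finset]
  simp only [mem_coe, ← coe_filter, Set.ncard_coe_finset]
  exact card_filter_tupleList_le_K3Z5Finset
end

section
/- Let S and τ be as follows: S is the set of 6-tuples (m11, m22, m12, m13, m14, m23) of nonnegative integers satisfying: m11+m22+m12+m13+m14+m23 ≤ 24; m11+m22+m12+m13+m14+m23 ≡ 4 (mod 5); -m11-m22+m14+m23 ≡ 4 (mod 5); -m11+3m22-m12+m13+m14-3m23 ≡ 1 (mod 5); 3m11-m22+m12-m13-3m14+m23 ≡ 1 (mod 5); and both b_+ = (1/5)(4 + 2m12 + 2m13 + 4m14 + 4m23) - 1 and b_- = (1/5)(20 + 4m11 + 4m22 + 2m12 + 2m13) - 1 are integers with 0 ≤ b_+ ≤ 3 and 0 ≤ b_- ≤ 19; and τ swaps m11 with m22, m12 with m13, and m14 with m23. Then exactly 41 of the τ-orbits in S consist of tuples satisfying none of the three conditions: (i) m11 = m22 = m12 = m13 =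 0; (ii) m22 ≥ 2m13 + 2m14 + 3m23; (iii) m11 ≥ 2m12 + 3m14 + 2m23. -/
/-- The three smoothability conditions (4.9)–(4.11) of Proposition 4.6 for the tuple
`(m₁₁, m₂₂, m₁₂, m₁₃, m₁₄, m₂₃)`: (i) `m₁₁ = m₂₂ = m₁₂ = m₁₃ = 0`;
(ii) `m₂₂ ≥ 2m₁₃ + 2m₁₄ + 3m₂₃`; (iii) `m₁₁ ≥ 2m₁₂ + 3m₁₄ + 2m₂₃`. -/
def smoothCond (m : ℕ × ℕ × ℕ × ℕ × ℕ × ℕ) : Prop :=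
  (m.1 = 0 ∧ m.2.1 = 0 ∧ m.2.2.1 = 0 ∧ m.2.2.2.1 = 0) ∨
  (m.2.1 ≥ 2 * m.2.2.2.1 + 2 * m.2.2.2.2.1 + 3 * m.2.2.2.2.2) ∨
  (m.1 ≥ 2 * m.2.2.1 + 3 * m.2.2.2.2.1 + 2 * m.2.2.2.2.2)


/-!
The total multiplicity is at most `24`, and integrality of `b₊ ∈ [0, 3]` forces
`m₁₂ + m₁₃ + 2 m₁₄ + 2 m₂₃ ∈ {3, 8}`. So `S` lies in an explicit box of about `40000` tuples,
and the kernel can list those whose whole `τ`-orbit violates (i)–(iii). Identifying an orbit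
`{x, τ x}` with the unordered pair `s(x, τ x) : Sym2 _` turns the count into the cardinality
of a computable finset.
-/

open Finset

section OrbitPairs

variable {α : Type*}

theorem setOf_pair_forall_eq_image (S : Set α) (τ : α → α) (p : α → Prop) :
    {Q : Set α | (∃ x ∈ S, Q = {x, τ x}) ∧ ∀ y ∈ Q, p y} =
      (fun x => ({x, τ x} : Set α)) '' {x ∈ S | p x ∧ p (τ x)} := by
  ext Q
  constructor
  · rintro ⟨⟨x, hxS, rfl⟩, hQ⟩
    exact ⟨x, ⟨hxS, hQ x (by simp), hQ (τ x) (by simp)⟩, rfl⟩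
  · rintro ⟨x, ⟨hxS, hx, hτx⟩, rfl⟩
    exact ⟨⟨x, hxS, rfl⟩, by rintro y (rfl | rfl) <;> assumption⟩

theorem ncard_image_pair_eq_card_image_sym2 [DecidableEq α] (B : Finset α) (τ : α → α) :
    ((fun x => ({x, τ x} : Set α)) '' ↑B).ncard = (B.image fun x => s(x, τ x)).card := by
  have hpair : (fun x => ({x, τ x} : Set α)) =
      (fun z : Sym2 α => {a | a ∈ z}) ∘ fun x => s(x, τ x) := by
    funext x
    ext a
    simp
  have hinj : Function.Injective fun z : Sym2 α => {a | a ∈ z} :=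
    fun z w h => Sym2.ext fun a => Set.ext_iff.1 h a
  rw [hpair, Set.image_comp, ← coe_image, Set.ncard_image_of_injective _ hinj,
    Set.ncard_coe_finset]

end OrbitPairs

theorem exists_int_cast_eq_div_sub_one_iff (d n : ℕ) (hd : d ≠ 0) (k : ℤ) :
    (∃ b : ℤ, (b : ℚ) = 1 / d * n - 1 ∧ 0 ≤ b ∧ b ≤ k) ↔
      d ∣ n ∧ d ≤ n ∧ (n : ℤ) ≤ d * (k + 1) := by
  have hdQ : (d : ℚ) ≠ 0 := by exact_mod_cast hd
  constructor
  · rintro ⟨b, hb, hb0, hbk⟩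
    have hn : (n : ℤ) = d * (b + 1) := by
      have : (n : ℚ) = d * (b + 1) := by rw [hb]; field_simp; ring
      exact_mod_cast this
    refine ⟨Int.natCast_dvd_natCast.1 ⟨b + 1, hn⟩, ?_, ?_⟩
    · have : (d : ℤ) ≤ n := by rw [hn]; nlinarith
      exact_mod_cast this
    · rw [hn]
      exact mul_le_mul_of_nonneg_left (by linarith) (Int.natCast_nonneg d)
  · rintro ⟨⟨q, rfl⟩, hdn, hnk⟩
    have hq : 1 ≤ q := by
      by_contra! hq
      interval_cases q
      omega
    refine ⟨(q : ℤ) - 1, by push_cast; field_simp, by omega, ?_⟩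
    push_cast at hnk
    have hd0 : (0 : ℤ) < d := by omega
    nlinarith

theorem k3Z5Cond_iff (a b c d e f : ℕ) :
    K3Z5Cond a b c d e f ↔
      a + b + c + d + e + f ≤ 24 ∧
      a + b + c + d + e + f ≡ 4 [MOD 5] ∧
      (-(a : ℤ) - b + e + f) ≡ 4 [ZMOD 5] ∧
      (-(a : ℤ) + 3 * b - c + d + e - 3 * f) ≡ 1 [ZMOD 5] ∧
      (3 * (a : ℤ) - b + c - d - 3 * e + f) ≡ 1 [ZMOD 5] ∧
      (5 ∣ 4 + 2 * c + 2 * d + 4 * e + 4 * f ∧ 5 ≤ 4 + 2 * c + 2 * d + 4 * e + 4 * f ∧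
        4 + 2 * c + 2 * d + 4 * e + 4 * f ≤ 20) ∧
      (5 ∣ 20 + 4 * a + 4 * b + 2 * c + 2 * d ∧ 5 ≤ 20 + 4 * a + 4 * b + 2 * c + 2 * d ∧
        20 + 4 * a + 4 * b + 2 * c + 2 * d ≤ 100) := by
  have hp : 1 / 5 * (4 + 2 * (c : ℚ) + 2 * d + 4 * e + 4 * f) =
      1 / ((5 : ℕ) : ℚ) * ((4 + 2 * c + 2 * d + 4 * e + 4 * f : ℕ) : ℚ) := by push_cast; ring
  have hm : 1 / 5 * (20 + 4 * (a : ℚ) + 4 * b + 2 * c + 2 * d) =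
      1 / ((5 : ℕ) : ℚ) * ((20 + 4 * a + 4 * b + 2 * c + 2 * d : ℕ) : ℚ) := by push_cast; ring
  unfold K3Z5Cond
  rw [hp, hm, exists_int_cast_eq_div_sub_one_iff 5 _ (by norm_num),
    exists_int_cast_eq_div_sub_one_iff 5 _ (by norm_num)]
  norm_cast

instance (a b c d e f : ℕ) : Decidable (K3Z5Cond a b c d e f) :=
  decidable_of_iff _ (k3Z5Cond_iff a b c d e f).symm

instance : DecidablePred (· ∈ K3Z5Set) := fun m =>
  inferInstanceAs (Decidable (K3Z5Cond m.1 m.2.1 m.2.2.1 m.2.2.2.1 m.2.2.2.2.1 m.2.2.2.2.2))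

instance : DecidablePred smoothCond := fun m => by
  unfold smoothCond; infer_instance

def k3Z5Box : Finset (ℕ × ℕ × ℕ × ℕ × ℕ × ℕ) :=
  range 25 ×ˢ range 25 ×ˢ
    (range 9 ×ˢ range 9 ×ˢ range 5 ×ˢ range 5).filter
      fun t => t.1 + t.2.1 + 2 * t.2.2.1 + 2 * t.2.2.2 ∈ ({3, 8} : Finset ℕ)

theorem mem_k3Z5Box_of_mem_k3Z5Set {m : ℕ × ℕ × ℕ × ℕ × ℕ × ℕ} (hm : m ∈ K3Z5Set) :
    m ∈ k3Z5Box := by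
  obtain ⟨a, b, c, d, e, f⟩ := m
  obtain ⟨hsum, -, -, -, -, ⟨hdvd, hlo, hhi⟩, -⟩ := (k3Z5Cond_iff a b c d e f).1 hm
  simp only [k3Z5Box, mem_product, mem_filter, mem_range, mem_insert, mem_singleton]
  omega

def k3Z5NonSmooth : Finset (ℕ × ℕ × ℕ × ℕ × ℕ × ℕ) :=
  k3Z5Box.filter fun m => m ∈ K3Z5Set ∧ ¬ smoothCond m ∧ ¬ smoothCond (tauInv m)

theorem coe_k3Z5NonSmooth :
    (k3Z5NonSmooth : Set (ℕ × ℕ × ℕ × ℕ × ℕ × ℕ)) =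
      {x ∈ K3Z5Set | ¬ smoothCond x ∧ ¬ smoothCond (tauInv x)} := by
  ext m
  simp only [k3Z5NonSmooth, coe_filter, Set.mem_ofPred_eq]
  exact ⟨fun h => h.2, fun h => ⟨mem_k3Z5Box_of_mem_k3Z5Set h.1, h⟩⟩

set_option synthInstance.maxSize 100000 in
theorem card_image_sym2_k3Z5NonSmooth :
    (k3Z5NonSmooth.image fun m => s(m, tauInv m)).card = 41 := by
  decide +kernel

/-- Theorem 1.8(2): exactly `41` of the `τ`-orbits in `S` consist of tuples satisfying none
of the three conditions (i), (ii), (iii). -/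
theorem stmt14 :
    {Q : Set (ℕ × ℕ × ℕ × ℕ × ℕ × ℕ) |
      (∃ x ∈ K3Z5Set, Q = {x, tauInv x}) ∧ ∀ y ∈ Q, ¬ smoothCond y}.ncard = 41 := by
  rw [setOf_pair_forall_eq_image, ← coe_k3Z5NonSmooth, ncard_image_pair_eq_card_image_sym2,
    card_image_sym2_k3Z5NonSmooth]
end

section
/- Let ζ = exp(2πi/5), let σ : ℂP^4 → ℂP^4 be the map induced by the linear cyclic shift (z_0, z_1, z_2, z_3, z_4) ↦ (z_1, z_2, z_3, z_4, z_0) of ℂ^5, and let V = {[z_0 : z_1 : z_2 : z_3 : z_4] ∈ ℂP^4 : z_0^2+z_1^2+z_2^2+z_3^2+z_4^2 = 0 and z_0^3+z_1^3+z_2^3+z_3^3+z_4^3 = 0}. Then σ(V) = V, and the set of fixed points of σ in V is exactly {[1 : ζ^j : ζ^{2j} : ζ^{3j} : ζ^{4j}] : j = 1, 2, 3, 4}, which has exactly 4 elements. -/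
open scoped LinearAlgebra.Projectivization

/-- The linear automorphism of `ℂ⁵` given by the cyclic shift
`(z₀, z₁, z₂, z₃, z₄) ↦ (z₁, z₂, z₃, z₄, z₀)`. -/
noncomputable def cycShift : (Fin 5 → ℂ) ≃ₗ[ℂ] (Fin 5 → ℂ) :=
  LinearEquiv.funCongrLeft ℂ ℂ (Equiv.addRight (1 : Fin 5))

/-- The induced map `σ` on the projective space `ℂP⁴`. -/
noncomputable def sigmaMap : ℙ ℂ (Fin 5 → ℂ) → ℙ ℂ (Fin 5 → ℂ) :=
  Projectivization.map cycShift.toLinearMap cycShift.injective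

/-- The K3 surface `V ⊆ ℂP⁴` cut out by `Σ zᵢ² = 0` and `Σ zᵢ³ = 0`. -/
def Vset : Set (ℙ ℂ (Fin 5 → ℂ)) :=
  {p | (∑ i, (p.rep i) ^ 2) = 0 ∧ (∑ i, (p.rep i) ^ 3) = 0}

/-- The point `[1 : ζʲ : ζ²ʲ : ζ³ʲ : ζ⁴ʲ]` of `ℂP⁴`. -/
noncomputable def fixPt (ζ : ℂ) (j : ℕ) : ℙ ℂ (Fin 5 → ℂ) :=
  Projectivization.mk ℂ (fun i : Fin 5 => ζ ^ (j * (i : ℕ)))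
    (fun h => one_ne_zero (α := ℂ) (by simpa using congrFun h 0))

/-! A point `[v]` of `ℙ⁴` is fixed by `σ` iff `v` is an eigenvector of the cyclic shift. An
eigenvector with eigenvalue `a` satisfies `vᵢ = aⁱ v₀` and `a⁵ = 1`, so the fixed points of `σ` are
the five points `[1 : ζʲ : … : ζ⁴ʲ]`, `j < 5`, which are distinct. Their power sums
`Σᵢ ζ^{jki}` are geometric sums, vanishing exactly when `5 ∤ jk`; for `k = 2, 3` this excludes
only `j = 0`. Since `σ` permutes coordinates it preserves every power sum, hence `V`. -/

open Projectivization

section Cyclic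

variable {M : Type*} [Monoid M] {n : ℕ}

lemma pow_val_add_one {x : M} (hx : x ^ (n + 1) = 1) (i : Fin (n + 1)) :
    x ^ ((i + 1 : Fin (n + 1)) : ℕ) = x * x ^ (i : ℕ) := by
  rw [Fin.val_add_one]
  split_ifs with hi
  · rw [hi, Fin.val_last, ← pow_succ', hx, pow_zero]
  · rw [pow_succ']

variable {v : Fin (n + 1) → M} {a : M}

lemma apply_eq_pow_mul_apply_zero (h : ∀ i, v (i + 1) = a * v i) (i : Fin (n + 1)) :
    v i = a ^ (i : ℕ) * v 0 := by
  induction i using Fin.induction with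
  | zero => rw [Fin.val_zero, pow_zero, one_mul]
  | succ i ih => rw [← Fin.coeSucc_eq_succ, h, ih, Fin.coeSucc_eq_succ, Fin.val_succ,
      Fin.val_castSucc, pow_succ', mul_assoc]

lemma pow_succ_mul_apply_zero (h : ∀ i, v (i + 1) = a * v i) : a ^ (n + 1) * v 0 = v 0 := by
  have hlast := h (Fin.last n)
  rw [Fin.last_add_one, apply_eq_pow_mul_apply_zero h (Fin.last n), Fin.val_last] at hlast
  rw [pow_succ', mul_assoc, ← hlast]

end Cyclic

lemma IsPrimitiveRoot.sum_fin_pow_pow_eq_zero_iff {K : Type*} [Field K] [CharZero K] {ζ : K}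
    {n : ℕ} (hζ : IsPrimitiveRoot ζ n) (hn : n ≠ 0) (m : ℕ) :
    ∑ i : Fin n, (ζ ^ m) ^ (i : ℕ) = 0 ↔ ¬ n ∣ m := by
  rw [Fin.sum_univ_eq_sum_range (fun i => (ζ ^ m) ^ i) n, ← hζ.pow_eq_one_iff_dvd]
  by_cases h : ζ ^ m = 1
  · simp [h, hn]
  · rw [geom_sum_eq h, ← pow_mul, mul_comm, pow_mul, hζ.pow_eq_one, one_pow, sub_self, zero_div]
    simp [h]

lemma sum_smul_pow {ι K : Type*} [Fintype ι] [CommSemiring K] (c : K) (v : ι → K) (k : ℕ) :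
    ∑ i, (c • v) i ^ k = c ^ k * ∑ i, v i ^ k := by
  simp [Finset.mul_sum, mul_pow]

lemma mem_Vset_mk_iff {v : Fin 5 → ℂ} (hv : v ≠ 0) :
    mk ℂ v hv ∈ Vset ↔ ∑ i, v i ^ 2 = 0 ∧ ∑ i, v i ^ 3 = 0 := by
  obtain ⟨a, ha⟩ := exists_smul_eq_mk_rep ℂ v hv
  simp only [Vset, Set.mem_ofPred_eq, ← ha, Units.smul_def, sum_smul_pow, mul_eq_zero,
    pow_eq_zero_iff two_ne_zero, pow_eq_zero_iff three_ne_zero, a.ne_zero, false_or]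

lemma sum_pow_cycShift (v : Fin 5 → ℂ) (k : ℕ) : ∑ i, cycShift v i ^ k = ∑ i, v i ^ k :=
  Equiv.sum_comp (Equiv.addRight 1) fun i => v i ^ k

lemma sigmaMap_mk (v : Fin 5 → ℂ) (hv : v ≠ 0) :
    sigmaMap (mk ℂ v hv) = mk ℂ (cycShift v) (cycShift.map_ne_zero_iff.2 hv) :=
  map_mk _ _ _ _

lemma sigmaMap_surjective : Function.Surjective sigmaMap := by
  intro p
  induction p using ind with
  | h v hv =>
    exact ⟨mk ℂ (cycShift.symm v) (cycShift.symm.map_ne_zero_iff.2 hv), by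
      rw [sigmaMap_mk]; simp only [LinearEquiv.apply_symm_apply]⟩

lemma preimage_sigmaMap_Vset : sigmaMap ⁻¹' Vset = Vset := by
  ext p
  induction p using ind with
  | h v hv => simp only [Set.mem_preimage, sigmaMap_mk, mem_Vset_mk_iff, sum_pow_cycShift]

lemma image_sigmaMap_Vset : sigmaMap '' Vset = Vset := by
  conv_lhs => rw [← preimage_sigmaMap_Vset]
  exact Set.image_preimage_eq _ sigmaMap_surjective

lemma sigmaMap_fixPt {ζ : ℂ} (hζ : ζ ^ 5 = 1) (j : ℕ) : sigmaMap (fixPt ζ j) = fixPt ζ j := by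
  rw [fixPt, sigmaMap_mk, mk_eq_mk_iff']
  refine ⟨ζ ^ j, funext fun i => ?_⟩
  have hζj : (ζ ^ j) ^ (4 + 1) = 1 := by rw [← pow_mul, mul_comm, pow_mul, hζ, one_pow]
  simp only [Pi.smul_apply, smul_eq_mul, pow_mul]
  exact (pow_val_add_one hζj i).symm

lemma sigmaMap_eq_self_iff {ζ : ℂ} (hζ : IsPrimitiveRoot ζ 5) (p : ℙ ℂ (Fin 5 → ℂ)) :
    sigmaMap p = p ↔ ∃ j < 5, p = fixPt ζ j := by
  refine ⟨fun hp => ?_, fun ⟨j, _, hj⟩ => hj ▸ sigmaMap_fixPt hζ.pow_eq_one j⟩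
  induction p using ind with
  | h v hv =>
    obtain ⟨a, ha⟩ := (mk_eq_mk_iff' ..).1 ((sigmaMap_mk v hv).symm.trans hp)
    have hstep : ∀ i, v (i + 1) = a * v i := fun i => (congrFun ha i).symm
    have hv0 : v 0 ≠ 0 := fun h0 =>
      hv (funext fun i => by rw [apply_eq_pow_mul_apply_zero hstep i, h0, mul_zero, Pi.zero_apply])
    have ha5 : a ^ 5 = 1 := by
      simpa [hv0] using mul_left_eq_self₀.1 (pow_succ_mul_apply_zero hstep)
    obtain ⟨j, hj, rfl⟩ := hζ.eq_pow_of_pow_eq_one ha5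
    refine ⟨j, hj, (mk_eq_mk_iff' ..).2 ⟨v 0, funext fun i => ?_⟩⟩
    rw [Pi.smul_apply, smul_eq_mul, apply_eq_pow_mul_apply_zero hstep i, pow_mul, mul_comm]

lemma fixPt_mem_Vset_iff {ζ : ℂ} (hζ : IsPrimitiveRoot ζ 5) (j : ℕ) :
    fixPt ζ j ∈ Vset ↔ ¬ 5 ∣ j := by
  have hsum : ∀ k, ∑ i : Fin 5, (ζ ^ (j * (i : ℕ))) ^ k = ∑ i : Fin 5, (ζ ^ (j * k)) ^ (i : ℕ) :=
    fun k => Finset.sum_congr rfl fun i _ => by rw [← pow_mul, ← pow_mul, mul_right_comm]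
  rw [fixPt, mem_Vset_mk_iff, hsum, hsum, hζ.sum_fin_pow_pow_eq_zero_iff (by norm_num),
    hζ.sum_fin_pow_pow_eq_zero_iff (by norm_num)]
  omega

lemma fixPt_injOn {ζ : ℂ} (hζ : IsPrimitiveRoot ζ 5) : Set.InjOn (fixPt ζ) (Set.Iio 5) := by
  intro j hj k hk h
  obtain ⟨a, ha⟩ := (mk_eq_mk_iff' ..).1 h
  have h0 := congrFun ha 0
  have h1 := congrFun ha 1
  simp only [Pi.smul_apply, smul_eq_mul, Fin.val_zero, Fin.val_one, mul_zero, mul_one,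
    pow_zero] at h0 h1
  rw [h0, one_mul] at h1
  exact hζ.pow_inj hj hk h1.symm

lemma fixedPoints_Vset_eq {ζ : ℂ} (hζ : IsPrimitiveRoot ζ 5) :
    {p | p ∈ Vset ∧ sigmaMap p = p} = fixPt ζ '' {1, 2, 3, 4} := by
  ext p
  simp only [Set.mem_ofPred_eq, sigmaMap_eq_self_iff hζ, Set.mem_image, Set.mem_insert_iff,
    Set.mem_singleton_iff]
  constructor
  · rintro ⟨hp, j, hj, rfl⟩
    rw [fixPt_mem_Vset_iff hζ] at hp
    exact ⟨j, by omega, rfl⟩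
  · rintro ⟨j, hj, rfl⟩
    exact ⟨(fixPt_mem_Vset_iff hζ j).2 (by omega), j, by omega, rfl⟩

/-- The fixed-point computation underlying Proposition 4.5: the cyclic shift `σ` preserves
the K3 surface `V = {Σ zᵢ² = 0, Σ zᵢ³ = 0} ⊆ ℂP⁴`, and its fixed points in `V` are exactly
the four points `[1 : ζʲ : ζ²ʲ : ζ³ʲ : ζ⁴ʲ]`, `j = 1, 2, 3, 4`, where `ζ = exp(2πi/5)`. -/
theorem stmt15 (ζ : ℂ) (hζ : ζ = Complex.exp (2 * Real.pi * Complex.I / 5)) :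
    sigmaMap '' Vset = Vset ∧
    {p | p ∈ Vset ∧ sigmaMap p = p} =
      {fixPt ζ 1, fixPt ζ 2, fixPt ζ 3, fixPt ζ 4} ∧
    ({fixPt ζ 1, fixPt ζ 2, fixPt ζ 3, fixPt ζ 4} :
      Set (ℙ ℂ (Fin 5 → ℂ))).ncard = 4 := by
  have hprim : IsPrimitiveRoot ζ 5 := hζ ▸ Complex.isPrimitiveRoot_exp 5 (by norm_num)
  have hpts : ({fixPt ζ 1, fixPt ζ 2, fixPt ζ 3, fixPt ζ 4} : Set (ℙ ℂ (Fin 5 → ℂ))) =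
      fixPt ζ '' {1, 2, 3, 4} := by
    simp only [Set.image_insert_eq, Set.image_singleton]
  have hsub : ({1, 2, 3, 4} : Set ℕ) ⊆ Set.Iio 5 := by
    intro j
    simp only [Set.mem_insert_iff, Set.mem_singleton_iff, Set.mem_Iio]
    omega
  refine ⟨image_sigmaMap_Vset, hpts ▸ fixedPoints_Vset_eq hprim, ?_⟩
  rw [hpts, ((fixPt_injOn hprim).mono hsub).ncard_image, Set.ncard_eq_toFinset_card']
  rfl
end

section
/- Let l ≥ 0 be an integer and let (n, m22, m13, m12) be one of (10l+2, 1, 40l+3, 5), (10l+4, 2, 40l+11, 5), (10l+6, 3, 40l+19, 5), with m11 = m14 = m23 = 0. Then this data satisfies all of: m11+m22+m12+m13+m14+m23 ≤ 12n; m11+m22+m12+m13+m14+m23 ≡ -3n (mod 5); -m11-m22+m14+m23 ≡ 2n (mod 5); -m11+3m22-m12+m13+m14-3m23 ≡ 8n (mod 5); 3m11-m22+m12-m13-3m14+m23 ≡ 8n (mod 5); b_+ = (1/5)(2n + 2m12 + 2m13 + 4m14 + 4m23) - 1 is an integer with 0 ≤ b_+ ≤ 2n-1; b_- = (1/5)(10n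 + 4m11 + 4m22 + 2m12 + 2m13) - 1 is an integer with 0 ≤ b_- ≤ 10n-1; and it satisfies none of the three conditions: (i) m11 = m22 = m12 = m13 = 0; (ii) m22 ≥ 2m13 + 2m14 + 3m23; (iii) m11 ≥ 2m12 + 3m14 + 2m23. -/
/-!
All three data sets are the members `m22 = 1, 2, 3` of one family: `n = 10 l + 2 m22`,
`m12 = 5`, `m13 = 4n - 5` and the other multiplicities zero. Since `m12 + m13 = 4n`, the formula
for `b₊` gives exactly `2n - 1`, and `b₋ = 8 m22 + 36 l - 1`. As `m12 ≡ 0` and `m13 ≡ -n`, the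
congruences mod 5 reduce to `m22 ≡ 3n`, which holds because `n ≡ 2 m22 (mod 10)`. The
smoothability conditions fail because `m13` is large compared with `m22`, and `m11 = 0 < 2 m12`.
-/

def Z5FixedPointFamily (l n m11 m22 m12 m13 m14 m23 : ℕ) : Prop :=
  m11 = 0 ∧ m14 = 0 ∧ m23 = 0 ∧ m12 = 5 ∧ n = 10 * l + 2 * m22 ∧ 0 < m22 ∧ m13 + 5 = 4 * n

namespace Z5FixedPointFamily

variable {l n m11 m22 m12 m13 m14 m23 : ℕ}

theorem of_cases
    (hcase : (n = 10 * l + 2 ∧ m22 = 1 ∧ m13 = 40 * l + 3 ∧ m12 = 5) ∨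
             (n = 10 * l + 4 ∧ m22 = 2 ∧ m13 = 40 * l + 11 ∧ m12 = 5) ∨
             (n = 10 * l + 6 ∧ m22 = 3 ∧ m13 = 40 * l + 19 ∧ m12 = 5))
    (h11 : m11 = 0) (h14 : m14 = 0) (h23 : m23 = 0) :
    Z5FixedPointFamily l n m11 m22 m12 m13 m14 m23 := by
  unfold Z5FixedPointFamily
  omega

variable (h : Z5FixedPointFamily l n m11 m22 m12 m13 m14 m23)
include h

theorem sum_le : m11 + m22 + m12 + m13 + m14 + m23 ≤ 12 * n := by
  unfold Z5FixedPointFamily at h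
  omega

theorem modEq_conditions :
    ((m11 : ℤ) + m22 + m12 + m13 + m14 + m23) ≡ -3 * n [ZMOD 5] ∧
    (-(m11 : ℤ) - m22 + m14 + m23) ≡ 2 * n [ZMOD 5] ∧
    (-(m11 : ℤ) + 3 * m22 - m12 + m13 + m14 - 3 * m23) ≡ 8 * n [ZMOD 5] ∧
    (3 * (m11 : ℤ) - m22 + m12 - m13 - 3 * m14 + m23) ≡ 8 * n [ZMOD 5] := by
  unfold Z5FixedPointFamily at h
  simp only [Int.ModEq]
  omega

theorem exists_bPlus :
    ∃ bp : ℤ, (bp : ℚ) = 1/5 * (2 * n + 2 * m12 + 2 * m13 + 4 * m14 + 4 * m23) - 1 ∧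
      0 ≤ bp ∧ (bp : ℚ) ≤ 2 * n - 1 := by
  obtain ⟨-, rfl, rfl, rfl, hn, hpos, h13⟩ := h
  have h13' : (m13 : ℚ) + 5 = 4 * n := by exact_mod_cast h13
  refine ⟨2 * n - 1, ?_, by omega, by push_cast; rfl⟩
  push_cast
  linarith

theorem exists_bMinus :
    ∃ bm : ℤ, (bm : ℚ) = 1/5 * (10 * n + 4 * m11 + 4 * m22 + 2 * m12 + 2 * m13) - 1 ∧
      0 ≤ bm ∧ (bm : ℚ) ≤ 10 * n - 1 := by
  obtain ⟨rfl, -, -, rfl, hn, hpos, h13⟩ := h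
  have hn' : (n : ℚ) = 10 * l + 2 * m22 := by exact_mod_cast hn
  have h13' : (m13 : ℚ) + 5 = 4 * n := by exact_mod_cast h13
  refine ⟨8 * m22 + 36 * l - 1, ?_, by omega, ?_⟩ <;> push_cast <;> linarith

theorem not_smoothable :
    ¬(m11 = 0 ∧ m22 = 0 ∧ m12 = 0 ∧ m13 = 0) ∧
    ¬(m22 ≥ 2 * m13 + 2 * m14 + 3 * m23) ∧
    ¬(m11 ≥ 2 * m12 + 3 * m14 + 2 * m23) := by
  unfold Z5FixedPointFamily at h
  omega

end Z5FixedPointFamily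

/-- Key arithmetic verification in the proof of the `ℤ/5`-case of Theorem 1.2: for `E(n)`
(`e = 12n`, `s = -8n`, `b₊ = 2n-1`, `b₋ = 10n-1`), each of the three listed fixed point data
satisfies the realizability constraints (4.1)–(4.8) of Proposition 4.1 but none of the three
smoothability conditions (4.9)–(4.11) of Proposition 4.6. -/
theorem stmt16 (l n m11 m22 m12 m13 m14 m23 : ℕ)
    (hcase : (n = 10 * l + 2 ∧ m22 = 1 ∧ m13 = 40 * l + 3 ∧ m12 = 5) ∨
             (n = 10 * l + 4 ∧ m22 = 2 ∧ m13 = 40 * l + 11 ∧ m12 = 5) ∨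
             (n = 10 * l + 6 ∧ m22 = 3 ∧ m13 = 40 * l + 19 ∧ m12 = 5))
    (h11 : m11 = 0) (h14 : m14 = 0) (h23 : m23 = 0) :
    m11 + m22 + m12 + m13 + m14 + m23 ≤ 12 * n ∧
    ((m11 : ℤ) + m22 + m12 + m13 + m14 + m23) ≡ -3 * n [ZMOD 5] ∧
    (-(m11 : ℤ) - m22 + m14 + m23) ≡ 2 * n [ZMOD 5] ∧
    (-(m11 : ℤ) + 3 * m22 - m12 + m13 + m14 - 3 * m23) ≡ 8 * n [ZMOD 5] ∧
    (3 * (m11 : ℤ) - m22 + m12 - m13 - 3 * m14 + m23) ≡ 8 * n [ZMOD 5] ∧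
    (∃ bp : ℤ, (bp : ℚ) = 1/5 * (2 * n + 2 * m12 + 2 * m13 + 4 * m14 + 4 * m23) - 1 ∧
      0 ≤ bp ∧ (bp : ℚ) ≤ 2 * n - 1) ∧
    (∃ bm : ℤ, (bm : ℚ) = 1/5 * (10 * n + 4 * m11 + 4 * m22 + 2 * m12 + 2 * m13) - 1 ∧
      0 ≤ bm ∧ (bm : ℚ) ≤ 10 * n - 1) ∧
    ¬(m11 = 0 ∧ m22 = 0 ∧ m12 = 0 ∧ m13 = 0) ∧
    ¬(m22 ≥ 2 * m13 + 2 * m14 + 3 * m23) ∧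
    ¬(m11 ≥ 2 * m12 + 3 * m14 + 2 * m23) := by
  have hF := Z5FixedPointFamily.of_cases hcase h11 h14 h23
  obtain ⟨h₁, h₂, h₃, h₄⟩ := hF.modEq_conditions
  exact ⟨hF.sum_le, h₁, h₂, h₃, h₄, hF.exists_bPlus, hF.exists_bMinus, hF.not_smoothable⟩
end

section
/- Let n ≥ 2 be an even integer and consider the ℤ/7 fixed point data m33 = m24 = 7n/2, m14 = 4n, m23 = n, with all other m_{ij} equal to zero (indices ranging over the twelve types 11, 22, 33, 12, 24, 14, 15, 23, 13, 16, 25, 34). Set M1 = m11+m22+m33, M2 = m12+m24+m14, M3 = m16+m25+m34, M4 = m15+m23+m13. Then: the total number of fixed points Σ m_{ij} equals 12n and satisfies Σ m_{ij} ≡ -72n (mod 7); the four congruences -10M1 - 2M2 + 10M3 + 2M4 ≡ 8n (mod 7), -5m11+7m22+3m33-3m12+3m24+m14+5m16-7m25-3m34+3m15-3m23-m13 ≡ 8n (mod 7), 3m11-5m22+7m33+m12-3m24+3m14-3m16+5m25-7m34-m15+3m23-3m13 ≡ 8n (mod 7), and 7m11+3m22-5m33+3m12+m24-3m14-7m16-3m25+5m34-3m15-m23+3m13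 ≡ 8n (mod 7) all hold; b_+ = (1/7)(2n - 2M1 + 2M2 + 8M3 + 4M4) - 1 equals 2n-1 and b_- = (1/7)(10n + 8M1 + 4M2 - 2M3 + 2M4) - 1 equals 10n-1; and the data satisfies none of the four conditions: (i) M2 ≥ 3M1 + 4M4; (ii) 3m22 + 2m33 ≥ m12 + 3m24 + 3m16 + 6m25 + 5m34 + 2m15 + 3m13; (iii) 2m11 + 3m33 ≥ m24 + 3m14 + 5m16 + 3m25 + 6m34 + 3m15 + 2m23; (iv) 3m11 + 2m22 ≥ 3m12 + m14 + 6m16 + 5m25 + 3m34 + 3m23 + 2m13. -/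
/-!
The relation `2 m₃₃ = 7n` with `gcd(2, 7) = 1` forces `m₃₃ = m₂₄ = 7k` and `n = 2k`. Substituting,
every quantity becomes an integer multiple of `k`: the fixed point count is `24k`, the four
linear forms are `-96k, 44k, 58k, -54k`, each congruent to `16k = 8n` modulo 7, and `b±` come out
as `(28k)/7` and `(140k)/7`. The four inequalities reduce to `0 ≥ 14k`, `14k ≥ 21k`, `21k ≥ 35k`
and `0 ≥ 14k`, all false since `k ≥ 1`.
-/

theorem Nat.exists_eq_mul_and_eq_mul_of_mul_eq_mul {p q a n : ℕ} (hpq : p.Coprime q) (hq : 0 < q)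
    (h : p * a = q * n) : ∃ k, a = q * k ∧ n = p * k := by
  obtain ⟨k, rfl⟩ : q ∣ a := hpq.symm.dvd_of_dvd_mul_left ⟨n, h⟩
  refine ⟨k, rfl, Nat.eq_of_mul_eq_mul_left hq ?_⟩
  rw [← h]; ring

theorem stmt17_general (n : ℕ) (hn : 2 ≤ n)
    (m11 m22 m33 m12 m24 m14 m15 m23 m13 m16 m25 m34 : ℕ)
    (h33 : 2 * m33 = 7 * n) (h24 : 2 * m24 = 7 * n) (h14 : m14 = 4 * n) (h23 : m23 = n)
    (h11 : m11 = 0) (h22 : m22 = 0) (h12 : m12 = 0) (h15 : m15 = 0)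
    (h13 : m13 = 0) (h16 : m16 = 0) (h25 : m25 = 0) (h34 : m34 = 0) :
    (m11 + m22 + m33 + m12 + m24 + m14 + m15 + m23 + m13 + m16 + m25 + m34 = 12 * n) ∧
    (((m11 : ℤ) + m22 + m33 + m12 + m24 + m14 + m15 + m23 + m13 + m16 + m25 + m34)
      ≡ -72 * n [ZMOD 7]) ∧
    ((-10 * ((m11 : ℤ) + m22 + m33) - 2 * ((m12 : ℤ) + m24 + m14)
      + 10 * ((m16 : ℤ) + m25 + m34) + 2 * ((m15 : ℤ) + m23 + m13)) ≡ 8 * n [ZMOD 7]) ∧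
    ((-5 * (m11 : ℤ) + 7 * m22 + 3 * m33 - 3 * m12 + 3 * m24 + m14
      + 5 * m16 - 7 * m25 - 3 * m34 + 3 * m15 - 3 * m23 - m13) ≡ 8 * n [ZMOD 7]) ∧
    ((3 * (m11 : ℤ) - 5 * m22 + 7 * m33 + m12 - 3 * m24 + 3 * m14
      - 3 * m16 + 5 * m25 - 7 * m34 - m15 + 3 * m23 - 3 * m13) ≡ 8 * n [ZMOD 7]) ∧
    ((7 * (m11 : ℤ) + 3 * m22 - 5 * m33 + 3 * m12 + m24 - 3 * m14
      - 7 * m16 - 3 * m25 + 5 * m34 - 3 * m15 - m23 + 3 * m13) ≡ 8 * n [ZMOD 7]) ∧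
    ((1 : ℚ)/7 * (2 * n - 2 * ((m11 : ℚ) + m22 + m33) + 2 * ((m12 : ℚ) + m24 + m14)
      + 8 * ((m16 : ℚ) + m25 + m34) + 4 * ((m15 : ℚ) + m23 + m13)) - 1 = 2 * n - 1) ∧
    ((1 : ℚ)/7 * (10 * n + 8 * ((m11 : ℚ) + m22 + m33) + 4 * ((m12 : ℚ) + m24 + m14)
      - 2 * ((m16 : ℚ) + m25 + m34) + 2 * ((m15 : ℚ) + m23 + m13)) - 1 = 10 * n - 1) ∧
    ¬(m12 + m24 + m14 ≥ 3 * (m11 + m22 + m33) + 4 * (m15 + m23 + m13)) ∧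
    ¬(3 * m22 + 2 * m33 ≥ m12 + 3 * m24 + 3 * m16 + 6 * m25 + 5 * m34 + 2 * m15 + 3 * m13) ∧
    ¬(2 * m11 + 3 * m33 ≥ m24 + 3 * m14 + 5 * m16 + 3 * m25 + 6 * m34 + 3 * m15 + 2 * m23) ∧
    ¬(3 * m11 + 2 * m22 ≥ 3 * m12 + m14 + 6 * m16 + 5 * m25 + 3 * m34 + 3 * m23 + 2 * m13) := by
  obtain ⟨k, rfl, rfl⟩ := Nat.exists_eq_mul_and_eq_mul_of_mul_eq_mul (by norm_num) (by norm_num) h33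
  obtain rfl : m24 = 7 * k := by omega
  subst h14 h23 h11 h22 h12 h15 h13 h16 h25 h34
  refine ⟨by ring, ?_, ?_, ?_, ?_, ?_, by push_cast; ring, by push_cast; ring,
    by omega, by omega, by omega, by omega⟩ <;>
  · unfold Int.ModEq
    omega

/-- Key arithmetic verification in the proof of the `ℤ/7`-case of Theorem 1.2: for `E(n)`
(`e = 12n`, `s = -8n`, `b₊ = 2n-1`, `b₋ = 10n-1`) and the fixed point data
`m₃₃ = m₂₄ = 7n/2`, `m₁₄ = 4n`, `m₂₃ = n`, all other `m_{ij} = 0`, the realizability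
constraints (5.1)–(5.8) hold with `b₊^G = 2n-1` and `b₋^G = 10n-1`, while none of the four
smoothability conditions of Proposition 5.4 holds. -/
theorem stmt17 (n : ℕ) (hn : 2 ≤ n) (he : Even n)
    (m11 m22 m33 m12 m24 m14 m15 m23 m13 m16 m25 m34 : ℕ)
    (h33 : 2 * m33 = 7 * n) (h24 : 2 * m24 = 7 * n) (h14 : m14 = 4 * n) (h23 : m23 = n)
    (h11 : m11 = 0) (h22 : m22 = 0) (h12 : m12 = 0) (h15 : m15 = 0)
    (h13 : m13 = 0) (h16 : m16 = 0) (h25 : m25 = 0) (h34 : m34 = 0) :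
    (m11 + m22 + m33 + m12 + m24 + m14 + m15 + m23 + m13 + m16 + m25 + m34 = 12 * n) ∧
    (((m11 : ℤ) + m22 + m33 + m12 + m24 + m14 + m15 + m23 + m13 + m16 + m25 + m34)
      ≡ -72 * n [ZMOD 7]) ∧
    ((-10 * ((m11 : ℤ) + m22 + m33) - 2 * ((m12 : ℤ) + m24 + m14)
      + 10 * ((m16 : ℤ) + m25 + m34) + 2 * ((m15 : ℤ) + m23 + m13)) ≡ 8 * n [ZMOD 7]) ∧
    ((-5 * (m11 : ℤ) + 7 * m22 + 3 * m33 - 3 * m12 + 3 * m24 + m14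
      + 5 * m16 - 7 * m25 - 3 * m34 + 3 * m15 - 3 * m23 - m13) ≡ 8 * n [ZMOD 7]) ∧
    ((3 * (m11 : ℤ) - 5 * m22 + 7 * m33 + m12 - 3 * m24 + 3 * m14
      - 3 * m16 + 5 * m25 - 7 * m34 - m15 + 3 * m23 - 3 * m13) ≡ 8 * n [ZMOD 7]) ∧
    ((7 * (m11 : ℤ) + 3 * m22 - 5 * m33 + 3 * m12 + m24 - 3 * m14
      - 7 * m16 - 3 * m25 + 5 * m34 - 3 * m15 - m23 + 3 * m13) ≡ 8 * n [ZMOD 7]) ∧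
    ((1 : ℚ)/7 * (2 * n - 2 * ((m11 : ℚ) + m22 + m33) + 2 * ((m12 : ℚ) + m24 + m14)
      + 8 * ((m16 : ℚ) + m25 + m34) + 4 * ((m15 : ℚ) + m23 + m13)) - 1 = 2 * n - 1) ∧
    ((1 : ℚ)/7 * (10 * n + 8 * ((m11 : ℚ) + m22 + m33) + 4 * ((m12 : ℚ) + m24 + m14)
      - 2 * ((m16 : ℚ) + m25 + m34) + 2 * ((m15 : ℚ) + m23 + m13)) - 1 = 10 * n - 1) ∧
    ¬(m12 + m24 + m14 ≥ 3 * (m11 + m22 + m33) + 4 * (m15 + m23 + m13)) ∧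
    ¬(3 * m22 + 2 * m33 ≥ m12 + 3 * m24 + 3 * m16 + 6 * m25 + 5 * m34 + 2 * m15 + 3 * m13) ∧
    ¬(2 * m11 + 3 * m33 ≥ m24 + 3 * m14 + 5 * m16 + 3 * m25 + 6 * m34 + 3 * m15 + 2 * m23) ∧
    ¬(3 * m11 + 2 * m22 ≥ 3 * m12 + m14 + 6 * m16 + 5 * m25 + 3 * m34 + 3 * m23 + 2 * m13) :=
  stmt17_general n hn m11 m22 m33 m12 m24 m14 m15 m23 m13 m16 m25 m34 h33 h24 h14 h23 h11 h22 h12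
    h15 h13 h16 h25 h34
end
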